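/- arXiv:2201.13097 — 3 statements merged into one kernel-verified Lean document; each statement's English description precedes it below -/
import Mathlib

section
/- Bias lemma: Let f_1,…,f_N : ℝ^d → ℝ be convex, each f_i minimized at x_i*, and suppose f_i(x_j*) − f_i(x_i*) ≤ b_{ij} for all i,j. Let Λ = (λ_{ij}) be a row-stochastic N×N matrix (nonnegative entries with each row summing to 1). Define f^Λ(y) = (1/N) Σ_i f_i((Λy)_i) for y ∈ (ℝ^d)^N, let x^Λ be a minimizer of f^Λ, and f̄(x*) = (1/N) Σ_i f_i(x_i*). Then f^Λ(x^Λ) − f̄(x*) ≤ (1/N) Σ_{i,j} λ_{ij} b_{ij}. -/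
/-!
Evaluate `f^Λ` at `y = x*`. By Jensen, `f_i((Λx*)_i) ≤ ∑_j λ_ij f_i(x_j*)`, and each
`f_i(x_j*) ≤ f_i(x_i*) + b_ij`; since the row weights sum to one this gives
`f_i((Λx*)_i) ≤ f_i(x_i*) + ∑_j λ_ij b_ij`. Averaging over `i` and using
`f^Λ(x^Λ) ≤ f^Λ(x*)` finishes the proof.
-/

open Finset

theorem ConvexOn.map_sum_le_add_sum_mul {E ι : Type*} [AddCommGroup E] [Module ℝ E]
    {s : Set E} {f : E → ℝ} (hf : ConvexOn ℝ s f) {t : Finset ι} {w b : ι → ℝ} {x : ι → E}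
    (y : E) (hw₀ : ∀ j ∈ t, 0 ≤ w j) (hw₁ : ∑ j ∈ t, w j = 1) (hx : ∀ j ∈ t, x j ∈ s)
    (hb : ∀ j ∈ t, f (x j) - f y ≤ b j) :
    f (∑ j ∈ t, w j • x j) ≤ f y + ∑ j ∈ t, w j * b j :=
  calc f (∑ j ∈ t, w j • x j)
      ≤ ∑ j ∈ t, w j * f (x j) := hf.map_sum_le hw₀ hw₁ hx
    _ ≤ ∑ j ∈ t, w j * (f y + b j) :=
        sum_le_sum fun j hj => mul_le_mul_of_nonneg_left (by linarith [hb j hj]) (hw₀ j hj)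
    _ = f y + ∑ j ∈ t, w j * b j := by
        simp only [mul_add, sum_add_distrib, ← sum_mul, hw₁, one_mul]

theorem bias_lemma_general {d N : ℕ}
    (f : Fin N → EuclideanSpace ℝ (Fin d) → ℝ)
    (hconv : ∀ i, ConvexOn ℝ Set.univ (f i))
    (xstar : Fin N → EuclideanSpace ℝ (Fin d))
    (b : Fin N → Fin N → ℝ)
    (hb : ∀ i j, f i (xstar j) - f i (xstar i) ≤ b i j)
    (Λ : Fin N → Fin N → ℝ)
    (hΛnonneg : ∀ i j, 0 ≤ Λ i j)
    (hΛrow : ∀ i, ∑ j, Λ i j = 1)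
    (fΛ : (Fin N → EuclideanSpace ℝ (Fin d)) → ℝ)
    (hfΛ : ∀ y, fΛ y = (N : ℝ)⁻¹ * ∑ i, f i (∑ j, Λ i j • y j))
    (xΛ : Fin N → EuclideanSpace ℝ (Fin d))
    (hxΛ : ∀ y, fΛ xΛ ≤ fΛ y) :
    fΛ xΛ - (N : ℝ)⁻¹ * ∑ i, f i (xstar i) ≤ (N : ℝ)⁻¹ * ∑ i, ∑ j, Λ i j * b i j := by
  have jensen : ∀ i, f i (∑ j, Λ i j • xstar j) ≤ f i (xstar i) + ∑ j, Λ i j * b i j :=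
    fun i => (hconv i).map_sum_le_add_sum_mul (xstar i) (fun j _ => hΛnonneg i j) (hΛrow i)
      (fun j _ => Set.mem_univ _) (fun j _ => hb i j)
  calc fΛ xΛ - (N : ℝ)⁻¹ * ∑ i, f i (xstar i)
      ≤ fΛ xstar - (N : ℝ)⁻¹ * ∑ i, f i (xstar i) := by linarith [hxΛ xstar]
    _ ≤ (N : ℝ)⁻¹ * ∑ i, (f i (xstar i) + ∑ j, Λ i j * b i j)
          - (N : ℝ)⁻¹ * ∑ i, f i (xstar i) := by
        rw [hfΛ]
        gcongr with i
        exact jensen i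
    _ = (N : ℝ)⁻¹ * ∑ i, ∑ j, Λ i j * b i j := by
        rw [sum_add_distrib]
        ring

/-- Bias lemma: for convex `f_i` with minimizers `x_i*`, generalization gaps bounded by
`b_{ij}`, and a row-stochastic matrix `Λ`, the minimum of
`f^Λ(y) = N⁻¹ ∑ᵢ f_i((Λy)_i)` exceeds `f̄(x*) = N⁻¹ ∑ᵢ f_i(x_i*)` by at most
`N⁻¹ ∑_{i,j} λ_{ij} b_{ij}`. -/
theorem bias_lemma {d N : ℕ} (hN : 0 < N)
    (f : Fin N → EuclideanSpace ℝ (Fin d) → ℝ)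
    (hconv : ∀ i, ConvexOn ℝ Set.univ (f i))
    (xstar : Fin N → EuclideanSpace ℝ (Fin d))
    (hmin : ∀ i, ∀ x, f i (xstar i) ≤ f i x)
    (b : Fin N → Fin N → ℝ)
    (hb : ∀ i j, f i (xstar j) - f i (xstar i) ≤ b i j)
    (Λ : Fin N → Fin N → ℝ)
    (hΛnonneg : ∀ i j, 0 ≤ Λ i j)
    (hΛrow : ∀ i, ∑ j, Λ i j = 1)
    (fΛ : (Fin N → EuclideanSpace ℝ (Fin d)) → ℝ)
    (hfΛ : ∀ y, fΛ y = (N : ℝ)⁻¹ * ∑ i, f i (∑ j, Λ i j • y j))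
    (xΛ : Fin N → EuclideanSpace ℝ (Fin d))
    (hxΛ : ∀ y, fΛ xΛ ≤ fΛ y) :
    fΛ xΛ - (N : ℝ)⁻¹ * ∑ i, f i (xstar i) ≤ (N : ℝ)⁻¹ * ∑ i, ∑ j, Λ i j * b i j :=
  bias_lemma_general f hconv xstar b hb Λ hΛnonneg hΛrow fΛ hfΛ xΛ hxΛ
end

section
/- If f_i is μ-strongly convex (hence μ-PL) and satisfies the hypotheses of the previous gradient-norm-transfer statement, then f_i(x) − f_i(x_i*) ≤ (1/μ)Σ_j λ_j b̃_{ij} + 2(m+1)(L/μ)(f^λ(x) − f^λ(x^λ)) for all x, where x_i* minimizes f_i. -/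
/-!
Both the μ-PL inequality for `f_i` and the gradient bound `‖∇f^λ(x)‖² ≤ 2L(f^λ(x) − f^λ(x^λ))`
come from minimizing the quadratic `v ↦ ⟪a, v⟫ + c/2 ‖v‖²`, whose minimum `−‖a‖²/(2c)` is attained
at `v = −c⁻¹ a`. Combined with `‖∇f_i‖² ≤ 2‖∇f_i − ∇f^λ‖² + 2‖∇f^λ‖²` and the dissimilarity bound,
this gives `2μ(f_i(x) − f_i(x_i*)) ≤ ‖∇f_i(x)‖² ≤ 2∑_j λ_j b̃_{ij} + 4(m+1)L(f^λ(x) − f^λ(x^λ))`.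
-/

open Finset
open scoped RealInnerProductSpace

theorem norm_sq_le_of_norm_sub_sq_le {E : Type*} [SeminormedAddCommGroup E] {a b : E} {m B : ℝ}
    (h : ‖a - b‖ ^ 2 ≤ m * ‖b‖ ^ 2 + B) :
    ‖a‖ ^ 2 ≤ 2 * B + 2 * (m + 1) * ‖b‖ ^ 2 := by
  have htri : ‖a‖ ≤ ‖a - b‖ + ‖b‖ := norm_le_norm_sub_add a b
  have hsq : ‖a‖ ^ 2 ≤ 2 * (‖a - b‖ ^ 2 + ‖b‖ ^ 2) :=
    (pow_le_pow_left₀ (norm_nonneg a) htri 2).trans add_sq_le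
  linarith

section Quadratic

variable {E : Type*} [NormedAddCommGroup E] [InnerProductSpace ℝ E]

theorem neg_norm_sq_div_le_inner_add_norm_sq {c : ℝ} (hc : 0 < c) (a v : E) :
    -(‖a‖ ^ 2 / (2 * c)) ≤ ⟪a, v⟫ + c / 2 * ‖v‖ ^ 2 := by
  have hcs : -(‖a‖ * ‖v‖) ≤ ⟪a, v⟫ := neg_le_of_abs_le (abs_real_inner_le_norm a v)
  have hsq : 0 ≤ (c * ‖v‖ - ‖a‖) ^ 2 / (2 * c) := by positivity
  have hexpand : (c * ‖v‖ - ‖a‖) ^ 2 / (2 * c)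
      = c / 2 * ‖v‖ ^ 2 - ‖a‖ * ‖v‖ + ‖a‖ ^ 2 / (2 * c) := by
    field_simp
    ring
  linarith

theorem inner_add_norm_sq_neg_inv_smul {c : ℝ} (hc : c ≠ 0) (a : E) :
    ⟪a, -(c⁻¹ • a)⟫ + c / 2 * ‖-(c⁻¹ • a)‖ ^ 2 = -(‖a‖ ^ 2 / (2 * c)) := by
  rw [inner_neg_right, real_inner_smul_right, real_inner_self_eq_norm_sq, norm_neg, norm_smul,
    Real.norm_eq_abs, mul_pow, sq_abs]
  field_simp
  ring

theorem sub_le_norm_sq_div_of_quadratic_lower_bound {f : E → ℝ} {a x y : E} {c : ℝ}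
    (hc : 0 < c) (h : f x + ⟪a, y - x⟫ + c / 2 * ‖y - x‖ ^ 2 ≤ f y) :
    f x - f y ≤ ‖a‖ ^ 2 / (2 * c) := by
  linarith [neg_norm_sq_div_le_inner_add_norm_sq hc a (y - x)]

theorem norm_sq_le_of_quadratic_upper_bound {f : E → ℝ} {a x z : E} {c : ℝ} (hc : 0 < c)
    (h : ∀ y, f y ≤ f x + ⟪a, y - x⟫ + c / 2 * ‖y - x‖ ^ 2) (hz : ∀ y, f z ≤ f y) :
    ‖a‖ ^ 2 ≤ 2 * c * (f x - f z) := by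
  have hstep := h (x + -(c⁻¹ • a))
  rw [add_sub_cancel_left, add_assoc, inner_add_norm_sq_neg_inv_smul hc.ne'] at hstep
  have hdescent : ‖a‖ ^ 2 / (2 * c) ≤ f x - f z := by linarith [hz (x + -(c⁻¹ • a))]
  rwa [div_le_iff₀ (by positivity), mul_comm] at hdescent

end Quadratic

theorem function_value_transfer_general {d N : ℕ}
    (f : Fin N → EuclideanSpace ℝ (Fin d) → ℝ)
    (lam : Fin N → ℝ)
    (flam : EuclideanSpace ℝ (Fin d) → ℝ)
    (L : ℝ) (hL : 0 < L)
    (hsmooth : ∀ x y, flam y ≤ flam x + ⟪gradient flam x, y - x⟫ + L / 2 * ‖y - x‖ ^ 2)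
    (xlam : EuclideanSpace ℝ (Fin d)) (hxlam : ∀ x, flam xlam ≤ flam x)
    (i : Fin N) (m : ℝ) (hm : 0 ≤ m)
    (btil : Fin N → Fin N → ℝ)
    (hdissim : ∀ x, ‖gradient (f i) x - gradient flam x‖ ^ 2 ≤
      m * ‖gradient flam x‖ ^ 2 + ∑ j, lam j * btil i j)
    (μ : ℝ) (hμ : 0 < μ)
    -- μ-strong convexity of f_i
    (hsc : ∀ x y, f i x + ⟪gradient (f i) x, y - x⟫ + μ / 2 * ‖y - x‖ ^ 2 ≤ f i y)
    (xistar : EuclideanSpace ℝ (Fin d)) :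
    ∀ x, f i x - f i xistar ≤
      (1 / μ) * ∑ j, lam j * btil i j + 2 * (m + 1) * (L / μ) * (flam x - flam xlam) := by
  intro x
  have hPL := sub_le_norm_sq_div_of_quadratic_lower_bound hμ (hsc x xistar)
  have hgrad := norm_sq_le_of_quadratic_upper_bound hL (hsmooth x) hxlam
  have htransfer := norm_sq_le_of_norm_sub_sq_le (hdissim x)
  calc f i x - f i xistar ≤ ‖gradient (f i) x‖ ^ 2 / (2 * μ) := hPL
    _ ≤ (2 * ∑ j, lam j * btil i j + 2 * (m + 1) * (2 * L * (flam x - flam xlam))) / (2 * μ) := by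
        gcongr
        exact htransfer.trans (by gcongr)
    _ = _ := by
        field_simp

/-- If in addition `f_i` is `μ`-strongly convex (hence `μ`-PL) with minimizer `x_i*`, then
under the gradient-dissimilarity hypotheses,
`f_i(x) − f_i(x_i*) ≤ (1/μ)∑_j λ_j b̃_{ij} + 2(m+1)(L/μ)(f^λ(x) − f^λ(x^λ))`. -/
theorem function_value_transfer {d N : ℕ}
    (f : Fin N → EuclideanSpace ℝ (Fin d) → ℝ) (hdiff : ∀ j, Differentiable ℝ (f j))
    (lam : Fin N → ℝ) (hlam_nonneg : ∀ j, 0 ≤ lam j) (hlam_sum : ∑ j, lam j = 1)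
    (flam : EuclideanSpace ℝ (Fin d) → ℝ)
    (hflam : ∀ x, flam x = ∑ j, lam j * f j x)
    (L : ℝ) (hL : 0 < L)
    (hsmooth : ∀ x y, flam y ≤ flam x + ⟪gradient flam x, y - x⟫ + L / 2 * ‖y - x‖ ^ 2)
    (xlam : EuclideanSpace ℝ (Fin d)) (hxlam : ∀ x, flam xlam ≤ flam x)
    (i : Fin N) (m : ℝ) (hm : 0 ≤ m)
    (btil : Fin N → Fin N → ℝ) (hbtil : ∀ i' j, 0 ≤ btil i' j)
    (hdissim : ∀ x, ‖gradient (f i) x - gradient flam x‖ ^ 2 ≤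
      m * ‖gradient flam x‖ ^ 2 + ∑ j, lam j * btil i j)
    (μ : ℝ) (hμ : 0 < μ)
    -- μ-strong convexity of f_i
    (hsc : ∀ x y, f i x + ⟪gradient (f i) x, y - x⟫ + μ / 2 * ‖y - x‖ ^ 2 ≤ f i y)
    (xistar : EuclideanSpace ℝ (Fin d)) (histar : ∀ x, f i xistar ≤ f i x) :
    ∀ x, f i x - f i xistar ≤
      (1 / μ) * ∑ j, lam j * btil i j + 2 * (m + 1) * (L / μ) * (flam x - flam xlam) :=
  function_value_transfer_general f lam flam L hL hsmooth xlam hxlam i m hm btil hdissim μ hμ hsc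
    xistar
end

section
/- For the distribution family used in the lower bound construction: if D_i is the law of Ber(1/2 + δ_i α_k) ε_k (k uniform in {1,…,d}, ε_k the canonical basis, the Bernoulli variable independent of k), with δ_i = max(0, δ − b_{i1}), and H is a family of functions h : {0,1}^d → ℝ^d such that the diameter of h over any set of diameter ≤ 1 is at most 1 (locally bounded class), then d_H(D_i, D_j) ≤ |δ_i − δ_j| ≤ b_{ij}, provided (b_{ij}) satisfies the triangle inequality. -/
/-! The laws `D_i` differ only in the weights `1/2 ± δ_i α_k` of the two atoms `ε_k` and `0`
of the `k`-th component, so for every test function `h` the difference of expectations is the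
average over `k` of `(δ_i - δ_j) α_k (h ε_k - h 0)`. Since `‖ε_k - 0‖ ≤ 1`, local boundedness
gives `‖h ε_k - h 0‖ ≤ 1`, whence `d_H(D_i, D_j) ≤ |δ_i - δ_j|`. The bound
`|δ_i - δ_j| ≤ b_{ij}` is the `1`-Lipschitz property of `x ↦ (δ - x)⁺` combined with the
reverse triangle inequality `|b_{i1} - b_{j1}| ≤ b_{ij}`. -/

open MeasureTheory Finset

noncomputable def dH {Ξ : Type*} [MeasurableSpace Ξ] {d' : ℕ}
    (H : Set (Ξ → EuclideanSpace ℝ (Fin d'))) (D D' : Measure Ξ) : ℝ :=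
  ⨆ h : H, ‖(∫ ξ, (h : Ξ → EuclideanSpace ℝ (Fin d')) ξ ∂D)
      - ∫ ξ, (h : Ξ → EuclideanSpace ℝ (Fin d')) ξ ∂D'‖

lemma dH_le {Ξ : Type*} [MeasurableSpace Ξ] {d' : ℕ} {H : Set (Ξ → EuclideanSpace ℝ (Fin d'))}
    {D D' : Measure Ξ} {C : ℝ} (hC : 0 ≤ C)
    (h : ∀ f ∈ H, ‖(∫ ξ, f ξ ∂D) - ∫ ξ, f ξ ∂D'‖ ≤ C) : dH H D D' ≤ C :=
  Real.iSup_le (fun f ↦ h f f.2) hC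

lemma norm_inv_natCast_smul_sum_le {E : Type*} [NormedAddCommGroup E] [NormedSpace ℝ E] {d : ℕ}
    {v : Fin d → E} {C : ℝ} (hC : 0 ≤ C) (hv : ∀ k, ‖v k‖ ≤ C) :
    ‖(d : ℝ)⁻¹ • ∑ k, v k‖ ≤ C := by
  rcases Nat.eq_zero_or_pos d with rfl | hd
  · simpa using hC
  calc ‖(d : ℝ)⁻¹ • ∑ k, v k‖ ≤ (d : ℝ)⁻¹ * ∑ _k : Fin d, C := by
        rw [norm_smul, norm_inv, RCLike.norm_natCast]
        gcongr
        exact norm_sum_le_of_le _ fun k _ ↦ hv k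
    _ = C := by
        rw [sum_const, card_univ, Fintype.card_fin, nsmul_eq_mul]
        field_simp

lemma abs_sub_le_of_triangle {ι : Type*} {b : ι → ι → ℝ} (hsymm : ∀ i j, b i j = b j i)
    (htri : ∀ i j k, b i j ≤ b i k + b k j) (i j k : ι) : |b i k - b j k| ≤ b i j :=
  abs_sub_le_iff.2 ⟨by linarith [htri i k j], by linarith [htri j k i, hsymm i j]⟩

section TwoPointMixture

variable {Ξ E : Type*} [MeasurableSpace Ξ] [MeasurableSingletonClass Ξ]
  [NormedAddCommGroup E] [NormedSpace ℝ E] [CompleteSpace E] {d : ℕ}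

noncomputable def twoPointMixture (x : Fin d → Ξ) (y : Ξ) (p : Fin d → ℝ) : Measure Ξ :=
  (d : ENNReal)⁻¹ • ∑ k : Fin d,
    (ENNReal.ofReal (1 / 2 + p k) • Measure.dirac (x k) +
      ENNReal.ofReal (1 / 2 - p k) • Measure.dirac y)

lemma integral_ofReal_smul_dirac {w : ℝ} (hw : 0 ≤ w) (f : Ξ → E) (a : Ξ) :
    ∫ ξ, f ξ ∂(ENNReal.ofReal w • Measure.dirac a) = w • f a := by
  rw [integral_smul_measure, integral_dirac, ENNReal.toReal_ofReal hw]

lemma integral_twoPointMixture (x : Fin d → Ξ) (y : Ξ) {p : Fin d → ℝ}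
    (hp : ∀ k, |p k| ≤ 1 / 2) (f : Ξ → E) :
    ∫ ξ, f ξ ∂(twoPointMixture x y p) =
      (d : ℝ)⁻¹ • ∑ k, ((1 / 2 + p k) • f (x k) + (1 / 2 - p k) • f y) := by
  have hint : ∀ a : Ξ, ∀ w : ℝ, Integrable f (ENNReal.ofReal w • Measure.dirac a) :=
    fun a w ↦ (integrable_dirac enorm_lt_top).smul_measure ENNReal.ofReal_ne_top
  rw [twoPointMixture, integral_smul_measure,
    integral_finsetSum_measure fun k _ ↦ (hint _ _).add_measure (hint _ _),
    ENNReal.toReal_inv, ENNReal.toReal_natCast]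
  refine congrArg _ (sum_congr rfl fun k _ ↦ ?_)
  obtain ⟨hlo, hhi⟩ := abs_le.1 (hp k)
  rw [integral_add_measure (hint _ _) (hint _ _), integral_ofReal_smul_dirac (by linarith),
    integral_ofReal_smul_dirac (by linarith)]

lemma integral_twoPointMixture_sub (x : Fin d → Ξ) (y : Ξ) {p q : Fin d → ℝ}
    (hp : ∀ k, |p k| ≤ 1 / 2) (hq : ∀ k, |q k| ≤ 1 / 2) (f : Ξ → E) :
    (∫ ξ, f ξ ∂(twoPointMixture x y p)) - ∫ ξ, f ξ ∂(twoPointMixture x y q) =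
      (d : ℝ)⁻¹ • ∑ k, (p k - q k) • (f (x k) - f y) := by
  rw [integral_twoPointMixture x y hp, integral_twoPointMixture x y hq, ← smul_sub,
    ← sum_sub_distrib]
  exact congrArg _ (sum_congr rfl fun k _ ↦ by module)

lemma norm_integral_twoPointMixture_sub_le {x : Fin d → Ξ} {y : Ξ} {p q : Fin d → ℝ}
    (hp : ∀ k, |p k| ≤ 1 / 2) (hq : ∀ k, |q k| ≤ 1 / 2) {C : ℝ} (hC : 0 ≤ C)
    (hpq : ∀ k, |p k - q k| ≤ C) {f : Ξ → E} (hf : ∀ k, ‖f (x k) - f y‖ ≤ 1) :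
    ‖(∫ ξ, f ξ ∂(twoPointMixture x y p)) - ∫ ξ, f ξ ∂(twoPointMixture x y q)‖ ≤ C := by
  rw [integral_twoPointMixture_sub x y hp hq]
  refine norm_inv_natCast_smul_sum_le hC fun k ↦ ?_
  calc ‖(p k - q k) • (f (x k) - f y)‖ = |p k - q k| * ‖f (x k) - f y‖ := norm_smul _ _
    _ ≤ C * 1 := mul_le_mul (hpq k) (hf k) (norm_nonneg _) hC
    _ = C := mul_one C

end TwoPointMixture

theorem lower_bound_distribution_distance_general {d d' N : ℕ} [NeZero N]
    (δ : ℝ) (hδ : δ ≤ 1 / 2)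
    (α : Fin d → ℝ) (hα : ∀ k, α k = 1 ∨ α k = -1)
    (b : Fin N → Fin N → ℝ)
    (hbnonneg : ∀ i j, 0 ≤ b i j)
    (hbsymm : ∀ i j, b i j = b j i)
    (hbtri : ∀ i j k, b i j ≤ b i k + b k j)
    (δa : Fin N → ℝ) (hδa : ∀ i, δa i = max (δ - b i 0) 0)
    (D : Fin N → Measure (Fin d → ℝ))
    (hD : ∀ i, D i = (d : ENNReal)⁻¹ • ∑ k : Fin d,
      (ENNReal.ofReal (1 / 2 + δa i * α k) • Measure.dirac (Pi.single k (1 : ℝ)) +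
        ENNReal.ofReal (1 / 2 - δa i * α k) • Measure.dirac (0 : Fin d → ℝ)))
    (H : Set ((Fin d → ℝ) → EuclideanSpace ℝ (Fin d')))
    -- locally bounded class: diameter of the image of any 1-ball is at most 1
    (hHloc : ∀ h ∈ H, ∀ ξ ξ' : Fin d → ℝ, dist ξ ξ' ≤ 1 → ‖h ξ - h ξ'‖ ≤ 1) :
    ∀ i j, dH H (D i) (D j) ≤ |δa i - δa j| ∧ |δa i - δa j| ≤ b i j := by
  have hαabs : ∀ k, |α k| = 1 := fun k ↦ (abs_eq zero_le_one).2 (hα k)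
  have hδa_nonneg : ∀ i, 0 ≤ δa i := fun i ↦ hδa i ▸ le_max_right _ _
  have hδa_le : ∀ i, δa i ≤ 1 / 2 := fun i ↦
    hδa i ▸ max_le (by linarith [hbnonneg i 0]) (by linarith)
  have hweight : ∀ i k, |δa i * α k| ≤ 1 / 2 := fun i k ↦ by
    rw [abs_mul, hαabs, mul_one, abs_of_nonneg (hδa_nonneg i)]
    exact hδa_le i
  have hD' : ∀ i, D i = twoPointMixture (Pi.single · 1) 0 (fun k ↦ δa i * α k) := hD
  intro i j
  refine ⟨dH_le (abs_nonneg _) fun h hh ↦ ?_, ?_⟩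
  · rw [hD' i, hD' j]
    refine norm_integral_twoPointMixture_sub_le (hweight i) (hweight j) (abs_nonneg _)
      (fun k ↦ ?_) (fun k ↦ hHloc h hh _ _ ?_)
    · rw [← sub_mul, abs_mul, hαabs, mul_one]
    · rw [dist_zero_right, Pi.norm_single, norm_one]
  · rw [hδa i, hδa j]
    calc |max (δ - b i 0) 0 - max (δ - b j 0) 0| ≤ |b j 0 - b i 0| := by
          simpa using abs_max_sub_max_le_abs (δ - b i 0) (δ - b j 0) 0
      _ ≤ b i j := by
          rw [abs_sub_comm]
          exact abs_sub_le_of_triangle hbsymm hbtri i j 0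

/-- For the lower-bound construction: `D_i` is the law of `Ber(1/2 + δ_i α_k) ε_k` with
`k` uniform on `{1,…,d}`, `δ_i = (δ − b_{i1})⁺`, and `H` a class of measurable functions
whose image of any set of diameter `≤ 1` has diameter `≤ 1`. Then
`d_H(D_i, D_j) ≤ |δ_i − δ_j| ≤ b_{ij}`, for weights `b` satisfying the triangle
inequality. -/
theorem lower_bound_distribution_distance {d d' N : ℕ} (hd : 0 < d) [NeZero N]
    (δ : ℝ) (hδ0 : 0 < δ) (hδ : δ ≤ 1 / 2)
    (α : Fin d → ℝ) (hα : ∀ k, α k = 1 ∨ α k = -1)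
    (b : Fin N → Fin N → ℝ)
    (hbnonneg : ∀ i j, 0 ≤ b i j)
    (hbsymm : ∀ i j, b i j = b j i)
    (hbtri : ∀ i j k, b i j ≤ b i k + b k j)
    (δa : Fin N → ℝ) (hδa : ∀ i, δa i = max (δ - b i 0) 0)
    (D : Fin N → Measure (Fin d → ℝ))
    (hD : ∀ i, D i = (d : ENNReal)⁻¹ • ∑ k : Fin d,
      (ENNReal.ofReal (1 / 2 + δa i * α k) • Measure.dirac (Pi.single k (1 : ℝ)) +
        ENNReal.ofReal (1 / 2 - δa i * α k) • Measure.dirac (0 : Fin d → ℝ)))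
    (H : Set ((Fin d → ℝ) → EuclideanSpace ℝ (Fin d')))
    (hHmeas : ∀ h ∈ H, Measurable h)
    -- locally bounded class: diameter of the image of any 1-ball is at most 1
    (hHloc : ∀ h ∈ H, ∀ ξ ξ' : Fin d → ℝ, dist ξ ξ' ≤ 1 → ‖h ξ - h ξ'‖ ≤ 1) :
    ∀ i j, dH H (D i) (D j) ≤ |δa i - δa j| ∧ |δa i - δa j| ≤ b i j :=
  lower_bound_distribution_distance_general δ hδ α hα b hbnonneg hbsymm hbtri δa hδa D hD H hHloc
end
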